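/- arXiv:1301.6112 — 6 statements merged into one kernel-verified Lean document; each statement's English description precedes it below -/
import Mathlib

section
/- If K ⊂ ℝ² is a nonempty compact body (compact set equal to the closure of its interior) and K is connected, then the conic function F_K(x,y) = (1/A(K)) ∫_K (|x−α| + |y−β|) dα dβ has a unique global minimizer (x*,y*) ∈ ℝ², and F_K(x,y) > F_K(x*,y*) for all (x,y) ≠ (x*,y*). -/
/-!
Up to the factor `1 / A(K)`, `F_K(x, y)` is the sum of the mean absolute deviations of the two
coordinate marginals `ν` of the area measure on `K`, so each marginal needs a unique strict
minimiser. Since `ν` has no atoms it has a median `m`, i.e. `ν (Iio m) = ν (Ioi m)`. Pointwise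
`|x - t| - |m - t| ≥ (m - x) sign (t - m)`, strictly for `t` strictly between `x` and `m`, and the
right-hand side integrates to `0` at a median; so `x` does strictly worse than `m` as soon as `ν`
charges the interval between them. It does: `K` is connected, so its projection is an interval
with points on both sides of `m`, and `K` is the closure of its interior, so `ν` charges every
open set meeting that projection.
-/

open MeasureTheory Set Filter Topology

lemma mul_sign_le_abs_sub_sub_abs_sub (x m t : ℝ) :
    (m - x) * Real.sign (t - m) ≤ |x - t| - |m - t| := by
  rcases lt_trichotomy t m with h | rfl | h
  · rw [Real.sign_of_neg (sub_neg.2 h)]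
    cases abs_cases (x - t) <;> cases abs_cases (m - t) <;> linarith
  · simp
  · rw [Real.sign_of_pos (sub_pos.2 h)]
    cases abs_cases (x - t) <;> cases abs_cases (m - t) <;> linarith

lemma mul_sign_lt_abs_sub_sub_abs_sub {x m t : ℝ} (ht : t ∈ uIoo x m) :
    (m - x) * Real.sign (t - m) < |x - t| - |m - t| := by
  rcases le_total x m with h | h
  · obtain ⟨hxt, htm⟩ : x < t ∧ t < m := by rwa [uIoo_of_le h] at ht
    rw [Real.sign_of_neg (sub_neg.2 htm)]
    cases abs_cases (x - t) <;> cases abs_cases (m - t) <;> linarith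
  · obtain ⟨hmt, htx⟩ : m < t ∧ t < x := by rwa [uIoo_of_ge h] at ht
    rw [Real.sign_of_pos (sub_pos.2 hmt)]
    cases abs_cases (x - t) <;> cases abs_cases (m - t) <;> linarith

lemma sign_sub_eq_indicator_sub_indicator (m : ℝ) :
    (fun t => Real.sign (t - m)) = (Ioi m).indicator 1 - (Iio m).indicator 1 := by
  ext t
  rcases lt_trichotomy t m with h | rfl | h
  · simp [Real.sign_of_neg (sub_neg.2 h), h, h.not_gt]
  · simp
  · simp [Real.sign_of_pos (sub_pos.2 h), h, h.not_gt]

lemma integral_sign_sub (ν : Measure ℝ) [IsFiniteMeasure ν] (m : ℝ) :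
    ∫ t, Real.sign (t - m) ∂ν = ν.real (Ioi m) - ν.real (Iio m) := by
  rw [sign_sub_eq_indicator_sub_indicator, integral_sub', integral_indicator_one measurableSet_Ioi,
    integral_indicator_one measurableSet_Iio]
  all_goals exact (integrable_const 1).indicator (by measurability)

theorem integral_abs_sub_lt_of_median (ν : Measure ℝ) [IsFiniteMeasure ν]
    (hint : ∀ x, Integrable (fun t => |x - t|) ν) {m x : ℝ}
    (hm : ν.real (Iio m) = ν.real (Ioi m)) (hx : 0 < ν (uIoo x m)) :
    ∫ t, |m - t| ∂ν < ∫ t, |x - t| ∂ν := by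
  have hsign : Integrable (fun t => Real.sign (t - m)) ν := by
    rw [sign_sub_eq_indicator_sub_indicator]
    exact ((integrable_const 1).indicator measurableSet_Ioi).sub
      ((integrable_const 1).indicator measurableSet_Iio)
  have hdiff : Integrable (fun t => |x - t| - |m - t|) ν := (hint x).sub (hint m)
  have hpos : 0 < ∫ t, (|x - t| - |m - t| - (m - x) * Real.sign (t - m)) ∂ν := by
    refine (integral_pos_iff_support_of_nonneg_ae (ae_of_all _ fun t => ?_)
      (hdiff.sub (hsign.const_mul _))).2 (hx.trans_le (measure_mono fun t ht => ?_))
    · exact sub_nonneg.2 (mul_sign_le_abs_sub_sub_abs_sub x m t)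
    · exact (sub_pos.2 (mul_sign_lt_abs_sub_sub_abs_sub ht)).ne'
  rw [integral_sub hdiff (hsign.const_mul _), integral_sub (hint x) (hint m),
    integral_const_mul, integral_sign_sub, hm, sub_self, mul_zero] at hpos
  linarith

lemma continuous_measureReal_Iic (ν : Measure ℝ) [IsFiniteMeasure ν] [NullSingletonClass ν] :
    Continuous fun x => ν.real (Iic x) := by
  have h := intervalIntegral.continuous_primitive (μ := ν) (f := fun _ => (1 : ℝ))
    (fun _ _ => intervalIntegrable_const) 0
  simp only [intervalIntegral.integral_const_of_cdf, smul_eq_mul, mul_one] at h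
  exact (h.add continuous_const).congr fun x => sub_add_cancel _ (ν.real (Iic 0))

lemma tendsto_measureReal_Iic_atBot (ν : Measure ℝ) [IsFiniteMeasure ν] :
    Tendsto (fun x => ν.real (Iic x)) atBot (𝓝 0) := by
  have h := tendsto_measure_iInter_atBot (μ := ν) (fun x => measurableSet_Iic.nullMeasurableSet)
    (monotone_Iic (α := ℝ)) ⟨0, measure_ne_top ν _⟩
  rw [iInter_Iic_eq_empty_iff.2 (by simp), measure_empty] at h
  exact (ENNReal.tendsto_toReal ENNReal.zero_ne_top).comp h

theorem exists_measureReal_Iio_eq_half_and_measureReal_Ioi_eq_half (ν : Measure ℝ)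
    [IsFiniteMeasure ν] [NullSingletonClass ν] :
    ∃ m, ν.real (Iio m) = ν.real univ / 2 ∧ ν.real (Ioi m) = ν.real univ / 2 := by
  rcases eq_zero_or_neZero ν with rfl | _
  · exact ⟨0, by simp⟩
  have hU : 0 < ν.real univ := measureReal_univ_pos
  obtain ⟨m, hm⟩ := mem_range_of_exists_le_of_exists_ge (continuous_measureReal_Iic ν)
    ((tendsto_measureReal_Iic_atBot ν).eventually (ge_mem_nhds (half_pos hU))).exists
    (((ENNReal.tendsto_toReal (measure_ne_top ν univ)).comp
      (tendsto_measure_Iic_atTop ν)).eventually (le_mem_nhds (half_lt_self hU))).exists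
  simp only at hm
  refine ⟨m, by rw [measureReal_congr Iio_ae_eq_Iic, hm], ?_⟩
  rw [← compl_Iic, measureReal_compl measurableSet_Iic, hm]
  ring

section Marginal

variable {X : Type*} [MeasurableSpace X] {μ : Measure X} {K : Set X} {f : X → ℝ}

lemma nullSingletonClass_map_restrict (hf : Measurable f) (hfib : ∀ t, μ (f ⁻¹' {t}) = 0) :
    NullSingletonClass ((μ.restrict K).map f) :=
  ⟨fun t => by
    rw [Measure.map_apply hf (measurableSet_singleton t)]
    exact nonpos_iff_eq_zero.1 ((Measure.restrict_apply_le _ _).trans (hfib t).le)⟩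

lemma nonempty_inter_image_of_map_restrict_ne_zero (hf : Measurable f) {s : Set ℝ}
    (hs : MeasurableSet s) (h : (μ.restrict K).map f s ≠ 0) : (s ∩ f '' K).Nonempty := by
  rw [Measure.map_apply hf hs, Measure.restrict_apply (hf hs)] at h
  obtain ⟨p, hps, hpK⟩ := nonempty_of_measure_ne_zero h
  exact ⟨f p, hps, p, hpK, rfl⟩

variable [TopologicalSpace X] [OpensMeasurableSpace X]

lemma map_restrict_pos_of_isOpen [μ.IsOpenPosMeasure] (hK : K ⊆ closure (interior K))
    (hf : Continuous f) {U : Set ℝ} (hU : IsOpen U) (hUK : (U ∩ f '' K).Nonempty) :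
    0 < (μ.restrict K).map f U := by
  obtain ⟨_, hpU, p, hpK, rfl⟩ := hUK
  obtain ⟨q, hqU, hqK⟩ := mem_closure_iff.1 (hK hpK) _ (hU.preimage hf) hpU
  rw [Measure.map_apply hf.measurable hU.measurableSet,
    Measure.restrict_apply (hU.measurableSet.preimage hf.measurable)]
  exact ((hU.preimage hf).inter isOpen_interior).measure_pos μ ⟨q, hqU, hqK⟩ |>.trans_le
    (measure_mono (inter_subset_inter_right _ interior_subset))

variable [T2Space X] [IsFiniteMeasureOnCompacts μ]

lemma integrable_abs_sub_map_restrict (hK : IsCompact K) (hf : Continuous f) (x : ℝ) :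
    Integrable (fun t => |x - t|) ((μ.restrict K).map f) := by
  rw [integrable_map_measure (by fun_prop) hf.aemeasurable]
  exact ((continuous_const.sub hf).abs.continuousOn).integrableOn_compact hK

theorem exists_forall_setIntegral_abs_sub_lt [μ.IsOpenPosMeasure] (hKc : IsCompact K)
    (hKcl : K ⊆ closure (interior K)) (hconn : IsConnected K) (hf : Continuous f)
    (hfib : ∀ t, μ (f ⁻¹' {t}) = 0) :
    ∃ m, ∀ x ≠ m, ∫ p in K, |m - f p| ∂μ < ∫ p in K, |x - f p| ∂μ := by
  set ν := (μ.restrict K).map f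
  have : IsFiniteMeasure (μ.restrict K) := isFiniteMeasure_restrict.2 hKc.measure_ne_top
  have : NullSingletonClass ν := nullSingletonClass_map_restrict hf.measurable hfib
  have : NeZero ν := ⟨Measure.measure_univ_pos.1 <|
    map_restrict_pos_of_isOpen hKcl hf isOpen_univ (by simpa using hconn.nonempty)⟩
  obtain ⟨m, hm_lt, hm_gt⟩ := exists_measureReal_Iio_eq_half_and_measureReal_Ioi_eq_half ν
  have hhalf : 0 < ν.real univ / 2 := half_pos measureReal_univ_pos
  obtain ⟨a, ham, haK⟩ := nonempty_inter_image_of_map_restrict_ne_zero hf.measurable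
    measurableSet_Iio ((measureReal_ne_zero_iff).1 (hm_lt.trans_ne hhalf.ne'))
  obtain ⟨b, hmb, hbK⟩ := nonempty_inter_image_of_map_restrict_ne_zero hf.measurable
    measurableSet_Ioi ((measureReal_ne_zero_iff).1 (hm_gt.trans_ne hhalf.ne'))
  have hK_nhds : f '' K ∈ 𝓝 m := mem_of_superset (Icc_mem_nhds ham hmb)
    ((hconn.image f hf.continuousOn).isPreconnected.ordConnected.out haK hbK)
  refine ⟨m, fun x hx => ?_⟩
  have hm_cl : m ∈ closure (uIoo x m) := by
    rw [uIoo, closure_Ioo (inf_lt_sup.2 hx).ne]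
    exact ⟨inf_le_right, le_sup_right⟩
  obtain ⟨t, htK, htxm⟩ := mem_closure_iff_nhds.1 hm_cl _ hK_nhds
  have hν_int : ∀ y, ∫ t, |y - t| ∂ν = ∫ p in K, |y - f p| ∂μ := fun y =>
    integral_map hf.aemeasurable (by fun_prop)
  rw [← hν_int, ← hν_int]
  exact integral_abs_sub_lt_of_median ν (integrable_abs_sub_map_restrict hKc hf)
    (hm_lt.trans hm_gt.symm) (map_restrict_pos_of_isOpen hKcl hf isOpen_Ioo ⟨t, htxm, htK⟩)

end Marginal

lemma MeasureTheory.Measure.prod_preimage_fst_singleton {α β : Type*}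
    [MeasurableSpace α] [MeasurableSpace β]
    (μ : Measure α) [NullSingletonClass μ] (ν : Measure β) [SFinite ν] (a : α) :
    μ.prod ν (Prod.fst ⁻¹' {a}) = 0 := by
  rw [← prod_univ, Measure.prod_prod, measure_singleton, zero_mul]

lemma MeasureTheory.Measure.prod_preimage_snd_singleton {α β : Type*}
    [MeasurableSpace α] [MeasurableSpace β]
    (μ : Measure α) (ν : Measure β) [NullSingletonClass ν] [SFinite ν] (b : β) :
    μ.prod ν (Prod.snd ⁻¹' {b}) = 0 := by
  rw [← univ_prod, Measure.prod_prod, measure_singleton, mul_zero]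

lemma add_lt_add_of_forall_ne_lt {α β M : Type*} [AddCommMonoid M] [PartialOrder M]
    [IsOrderedCancelAddMonoid M] {g₁ : α → M} {g₂ : β → M} {m₁ : α} {m₂ : β}
    (hm₁ : ∀ x ≠ m₁, g₁ m₁ < g₁ x) (hm₂ : ∀ y ≠ m₂, g₂ m₂ < g₂ y) {w : α × β}
    (hw : w ≠ (m₁, m₂)) : g₁ m₁ + g₂ m₂ < g₁ w.1 + g₂ w.2 := by
  have hle₁ : g₁ m₁ ≤ g₁ w.1 := (eq_or_ne w.1 m₁).elim (fun h => h ▸ le_rfl) (hm₁ _ · |>.le)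
  have hle₂ : g₂ m₂ ≤ g₂ w.2 := (eq_or_ne w.2 m₂).elim (fun h => h ▸ le_rfl) (hm₂ _ · |>.le)
  rcases not_and_or.1 fun h : w.1 = m₁ ∧ w.2 = m₂ => hw (Prod.ext h.1 h.2) with h | h
  · exact add_lt_add_of_lt_of_le (hm₁ _ h) hle₂
  · exact add_lt_add_of_le_of_lt hle₁ (hm₂ _ h)

theorem stmt0_general (K : Set (ℝ × ℝ)) (hKc : IsCompact K)
    (hKcl : K = closure (interior K)) (hConn : IsConnected K)
    (F : ℝ × ℝ → ℝ)
    (hF : ∀ z : ℝ × ℝ, F z =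
      (volume K).toReal⁻¹ * ∫ p in K, (|z.1 - p.1| + |z.2 - p.2|)) :
    ∃ z : ℝ × ℝ, ∀ w : ℝ × ℝ, w ≠ z → F z < F w := by
  obtain ⟨m₁, hm₁⟩ := exists_forall_setIntegral_abs_sub_lt (μ := volume) hKc hKcl.le hConn
    continuous_fst fun t => by
      rw [Measure.volume_eq_prod]; exact Measure.prod_preimage_fst_singleton volume volume t
  obtain ⟨m₂, hm₂⟩ := exists_forall_setIntegral_abs_sub_lt (μ := volume) hKc hKcl.le hConn
    continuous_snd fun t => by
      rw [Measure.volume_eq_prod]; exact Measure.prod_preimage_snd_singleton volume volume t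
  have hvol : 0 < (volume K).toReal⁻¹ := by
    have hinterior : (interior K).Nonempty := closure_nonempty_iff.1 (hKcl ▸ hConn.nonempty)
    exact inv_pos.2 <| ENNReal.toReal_pos
      (isOpen_interior.measure_pos volume hinterior |>.trans_le (measure_mono interior_subset)).ne'
      hKc.measure_ne_top
  have hsplit : ∀ z : ℝ × ℝ, F z =
      (volume K).toReal⁻¹ * ((∫ p in K, |z.1 - p.1|) + ∫ p in K, |z.2 - p.2|) := fun z => by
    have hint (g : ℝ × ℝ → ℝ) (hg : Continuous g) : IntegrableOn g K :=
      hg.continuousOn.integrableOn_compact hKc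
    rw [hF, integral_add (hint (fun p => |z.1 - p.1|) (by fun_prop))
      (hint (fun p => |z.2 - p.2|) (by fun_prop))]
  refine ⟨(m₁, m₂), fun w hw => ?_⟩
  rw [hsplit, hsplit]
  exact mul_lt_mul_of_pos_left (add_lt_add_of_forall_ne_lt
    (g₁ := fun x => ∫ p in K, |x - p.1|) (g₂ := fun y => ∫ p in K, |y - p.2|) hm₁ hm₂ hw) hvol

theorem stmt0 (K : Set (ℝ × ℝ)) (hKne : K.Nonempty) (hKc : IsCompact K)
    (hKcl : K = closure (interior K)) (hConn : IsConnected K)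
    (F : ℝ × ℝ → ℝ)
    (hF : ∀ z : ℝ × ℝ, F z =
      (volume K).toReal⁻¹ * ∫ p in K, (|z.1 - p.1| + |z.2 - p.2|)) :
    ∃ z : ℝ × ℝ, ∀ w : ℝ × ℝ, w ≠ z → F z < F w :=
  stmt0_general K hKc hKcl hConn F hF
end

section
/- Let μ be a finite nonzero measure on a compact body K ⊂ ℝ². The generalized conic function F_{K,μ} satisfies the growth condition liminf_{‖(x,y)‖→∞} F_{K,μ}(x,y)/√(x²+y²) ≥ μ(K) > 0. -/
/-!
For `(α, β)` in the bounded set `K` the ℓ¹ distance `|x - α| + |y - β|` differs from `|x| + |y|` by at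
most a constant `C`, and `|x| + |y|` lies between `r` and `2 r`, where `r = √(x² + y²)`.
Integrating, `m r - C m ≤ F ≤ 2 m r + C m` with `m = μ(K)`, so `F / r ≥ m - C m / r → m`, while the
upper bound keeps `F / r` bounded, which is what makes the real-valued `liminf` meaningful.
-/

open MeasureTheory Filter

theorem le_liminf_div_of_affine_bounds {α : Type*} {l : Filter α} [l.NeBot] {F r : α → ℝ}
    {m c a b : ℝ} (hr : Tendsto r l atTop) (hlow : ∀ᶠ z in l, m * r z - c ≤ F z)
    (hup : ∀ᶠ z in l, F z ≤ a * r z + b) :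
    m ≤ liminf (fun z => F z / r z) l := by
  have hr1 : ∀ᶠ z in l, 1 ≤ r z := hr.eventually_ge_atTop 1
  have hgap : Tendsto (fun z => m - c / r z) l (nhds m) := by
    simpa using tendsto_const_nhds.sub (tendsto_const_nhds.div_atTop hr)
  have hcobdd : IsCoboundedUnder (· ≥ ·) l (fun z => F z / r z) := by
    refine isCoboundedUnder_ge_of_eventually_le l (x := a + |b|) ?_
    filter_upwards [hr1, hup] with z hz hFz
    rw [div_le_iff₀ (one_pos.trans_le hz)]
    nlinarith [le_abs_self b, abs_nonneg b]
  calc m = liminf (fun z => m - c / r z) l := hgap.liminf_eq.symm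
    _ ≤ liminf (fun z => F z / r z) l := by
      refine liminf_le_liminf ?_ hgap.isBoundedUnder_ge hcobdd
      filter_upwards [hr1, hlow] with z hz hFz
      have hz0 : 0 < r z := one_pos.trans_le hz
      rwa [le_div_iff₀ hz0, sub_mul, div_mul_cancel₀ _ hz0.ne']

theorem Real.sqrt_sq_add_sq_le_abs_add_abs (a b : ℝ) : √(a ^ 2 + b ^ 2) ≤ |a| + |b| := by
  rw [Real.sqrt_le_left (by positivity)]
  nlinarith [sq_abs a, sq_abs b, abs_nonneg a, abs_nonneg b]

theorem Real.abs_add_abs_le_two_mul_sqrt_sq_add_sq (a b : ℝ) :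
    |a| + |b| ≤ 2 * √(a ^ 2 + b ^ 2) := by
  have ha : |a| ≤ √(a ^ 2 + b ^ 2) := Real.abs_le_sqrt (by nlinarith)
  have hb : |b| ≤ √(a ^ 2 + b ^ 2) := Real.abs_le_sqrt (by nlinarith)
  linarith

theorem tendsto_sqrt_sq_add_sq_cocompact :
    Tendsto (fun z : ℝ × ℝ => √(z.1 ^ 2 + z.2 ^ 2)) (cocompact (ℝ × ℝ)) atTop := by
  refine tendsto_atTop_mono (fun z => ?_) tendsto_norm_cocompact_atTop
  rw [Prod.norm_def, Real.norm_eq_abs, Real.norm_eq_abs]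
  exact max_le (Real.abs_le_sqrt (by nlinarith)) (Real.abs_le_sqrt (by nlinarith))

section L1Distance

variable {μ : Measure (ℝ × ℝ)} {K : Set (ℝ × ℝ)} {C : ℝ}

theorem integrableOn_abs_sub_add_abs_sub (hKm : MeasurableSet K) (hK : μ K ≠ ⊤)
    (hC : ∀ p ∈ K, |p.1| + |p.2| ≤ C) (z : ℝ × ℝ) :
    IntegrableOn (fun p : ℝ × ℝ => |z.1 - p.1| + |z.2 - p.2|) K μ := by
  refine Measure.integrableOn_of_bounded (M := |z.1| + |z.2| + C) hK
    (by fun_prop) (ae_restrict_of_forall_mem hKm fun p hp => ?_)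
  rw [Real.norm_eq_abs, abs_of_nonneg (by positivity)]
  linarith [abs_sub z.1 p.1, abs_sub z.2 p.2, hC p hp]

theorem le_setIntegral_abs_sub_add_abs_sub (hKm : MeasurableSet K) (hK : μ K ≠ ⊤)
    (hC : ∀ p ∈ K, |p.1| + |p.2| ≤ C) (z : ℝ × ℝ) :
    (|z.1| + |z.2| - C) * μ.real K ≤ ∫ p in K, (|z.1 - p.1| + |z.2 - p.2|) ∂μ := by
  refine setIntegral_ge_of_const_le_real hKm hK (fun p hp => ?_)
    (integrableOn_abs_sub_add_abs_sub hKm hK hC z)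
  linarith [abs_sub_abs_le_abs_sub z.1 p.1, abs_sub_abs_le_abs_sub z.2 p.2, hC p hp]

theorem setIntegral_abs_sub_add_abs_sub_le (hKm : MeasurableSet K) (hK : μ K ≠ ⊤)
    (hC : ∀ p ∈ K, |p.1| + |p.2| ≤ C) (z : ℝ × ℝ) :
    ∫ p in K, (|z.1 - p.1| + |z.2 - p.2|) ∂μ ≤ (|z.1| + |z.2| + C) * μ.real K := by
  rw [mul_comm, ← smul_eq_mul, ← setIntegral_const]
  exact setIntegral_mono_on (integrableOn_abs_sub_add_abs_sub hKm hK hC z)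
    (integrableOn_const hK) hKm
    fun p hp => by linarith [abs_sub z.1 p.1, abs_sub z.2 p.2, hC p hp]

end L1Distance

theorem stmt2_general (K : Set (ℝ × ℝ)) (hKc : IsCompact K) (μ : Measure (ℝ × ℝ))
    (hμ0 : 0 < μ K) (hμ : μ K < ⊤)
    (F : ℝ × ℝ → ℝ)
    (hF : ∀ z : ℝ × ℝ, F z = ∫ p in K, (|z.1 - p.1| + |z.2 - p.2|) ∂μ) :
    0 < (μ K).toReal ∧
      (μ K).toReal ≤
        liminf (fun z : ℝ × ℝ => F z / Real.sqrt (z.1 ^ 2 + z.2 ^ 2))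
          (cocompact (ℝ × ℝ)) := by
  refine ⟨ENNReal.toReal_pos hμ0.ne' hμ.ne, ?_⟩
  show μ.real K ≤ _
  obtain ⟨C, hC⟩ := hKc.exists_bound_of_continuousOn
    (f := fun p : ℝ × ℝ => |p.1| + |p.2|) (by fun_prop)
  replace hC : ∀ p ∈ K, |p.1| + |p.2| ≤ C := fun p hp => (le_abs_self _).trans (hC p hp)
  have hKm : MeasurableSet K := hKc.isClosed.measurableSet
  have hm : 0 ≤ μ.real K := ENNReal.toReal_nonneg
  refine le_liminf_div_of_affine_bounds (c := C * μ.real K) (a := 2 * μ.real K)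
    (b := C * μ.real K) tendsto_sqrt_sq_add_sq_cocompact
    (Eventually.of_forall fun z => ?_) (Eventually.of_forall fun z => ?_)
  · rw [hF]
    refine le_trans ?_ (le_setIntegral_abs_sub_add_abs_sub hKm hμ.ne hC z)
    nlinarith [Real.sqrt_sq_add_sq_le_abs_add_abs z.1 z.2]
  · rw [hF]
    refine (setIntegral_abs_sub_add_abs_sub_le hKm hμ.ne hC z).trans ?_
    nlinarith [Real.abs_add_abs_le_two_mul_sqrt_sq_add_sq z.1 z.2]

theorem stmt2 (K : Set (ℝ × ℝ)) (hKne : K.Nonempty) (hKc : IsCompact K)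
    (hKcl : K = closure (interior K)) (μ : Measure (ℝ × ℝ))
    (hμ0 : 0 < μ K) (hμ : μ K < ⊤)
    (F : ℝ × ℝ → ℝ)
    (hF : ∀ z : ℝ × ℝ, F z = ∫ p in K, (|z.1 - p.1| + |z.2 - p.2|) ∂μ) :
    0 < (μ K).toReal ∧
      (μ K).toReal ≤
        liminf (fun z : ℝ × ℝ => F z / Real.sqrt (z.1 ^ 2 + z.2 ^ 2))
          (cocompact (ℝ × ℝ)) :=
  stmt2_general K hKc μ hμ0 hμ F hF
end

section
/- Let μ be a finite measure on a compact body K ⊂ ℝ² giving zero measure to all vertical and horizontal lines. Then F_{K,μ} has partial derivatives at every point (x,y) ∈ ℝ² given by D₁F_{K,μ}(x,y) = μ({(α,β)∈K : α<x}) − μ({(α,β)∈K : x<α}) and D₂F_{K,μ}(x,y) = μ({(α,β)∈K : β<y}) − μ({(α,β)∈K : y<β}). -/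
/-! Let `π` be a coordinate projection. Off the line `{p | π p = x₀}`, which is null by (C.3),
`t ↦ |t - π p|` is differentiable at `x₀` with derivative `1` if `π p < x₀` and `-1` if
`x₀ < π p`; being `1`-Lipschitz, it may be differentiated under the integral sign, and
integrating the two indicators gives the two measures. -/

open MeasureTheory Set

theorem ContinuousOn.integrableOn_of_isCompact_of_measure_ne_top {X E : Type*}
    [TopologicalSpace X] [MeasurableSpace X] [OpensMeasurableSpace X] [NormedAddCommGroup E]
    {f : X → E} {s : Set X} {μ : Measure X} (hf : ContinuousOn f s) (hs : IsCompact s)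
    (h's : MeasurableSet s) (hμ : μ s ≠ ⊤) : IntegrableOn f s μ := by
  obtain ⟨C, hC⟩ := hs.exists_bound_of_continuousOn hf
  exact ⟨hf.aestronglyMeasurable_of_isCompact hs h's,
    .restrict_of_bounded (C := C) hμ.lt_top (ae_restrict_of_forall_mem h's hC)⟩

section
variable {α : Type*} [MeasurableSpace α] {ν : Measure α} [IsFiniteMeasure ν] {π : α → ℝ}
  {x₀ : ℝ}

theorem hasDerivAt_integral_abs_sub (hπm : Measurable π) (hπi : Integrable π ν)
    (h₀ : ν {p | π p = x₀} = 0) :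
    HasDerivAt (fun t => ∫ p, |t - π p| ∂ν)
      (ν.real {p | π p < x₀} - ν.real {p | x₀ < π p}) x₀ := by
  set S := {p | π p < x₀}
  set T := {p | x₀ < π p}
  have hS : MeasurableSet S := hπm measurableSet_Iio
  have hT : MeasurableSet T := hπm measurableSet_Ioi
  have hint (t : ℝ) : Integrable (fun p => |t - π p|) ν := ((integrable_const t).sub hπi).abs
  have hlip (p : α) : LipschitzWith 1 (fun t => |t - π p|) := by
    simpa only [Real.dist_eq] using LipschitzWith.dist_left (π p)
  have hderiv : ∀ᵐ p ∂ν,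
      HasDerivAt (fun t => |t - π p|) (S.indicator 1 p - T.indicator 1 p) x₀ := by
    have hae : ∀ᵐ p ∂ν, π p ≠ x₀ := by rw [ae_iff]; simpa using h₀
    filter_upwards [hae] with p hp
    have hsub := (hasDerivAt_id x₀).sub_const (π p)
    rcases hp.lt_or_gt with h | h
    · have := (hasDerivAt_abs_pos (sub_pos.2 h)).comp x₀ hsub
      simpa [S, T, h, h.not_gt, Function.comp_def] using this
    · have := (hasDerivAt_abs_neg (sub_neg.2 h)).comp x₀ hsub
      simpa [S, T, h, h.not_gt, Function.comp_def] using this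
  have hmain := (hasDerivAt_integral_of_dominated_loc_of_lip (s := univ)
    (F' := fun p => S.indicator 1 p - T.indicator 1 p) (bound := fun _ => 1) Filter.univ_mem
    (.of_forall fun t => (hint t).aestronglyMeasurable) (hint x₀)
    ((measurable_one.indicator hS).sub (measurable_one.indicator hT)).aestronglyMeasurable
    (.of_forall fun p => by simpa using hlip p) (integrable_const 1) hderiv).2
  rwa [integral_sub ((integrable_const 1).indicator hS) ((integrable_const 1).indicator hT),
    integral_indicator_one hS, integral_indicator_one hT] at hmain

theorem hasDerivAt_integral_abs_sub_add {g : α → ℝ} (hπm : Measurable π) (hπi : Integrable π ν)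
    (hg : Integrable g ν) (h₀ : ν {p | π p = x₀} = 0) :
    HasDerivAt (fun t => ∫ p, |t - π p| + g p ∂ν)
      (ν.real {p | π p < x₀} - ν.real {p | x₀ < π p}) x₀ :=
  ((hasDerivAt_integral_abs_sub hπm hπi h₀).add_const _).congr_of_eventuallyEq
    (.of_forall fun t => integral_add ((integrable_const t).sub hπi).abs hg)

end

theorem stmt5_general (K : Set (ℝ × ℝ)) (hKc : IsCompact K)
    (μ : Measure (ℝ × ℝ)) (hμ : μ K < ⊤)
    (hC3 : ∀ x : ℝ, μ {p ∈ K | p.1 = x} = 0 ∧ μ {p ∈ K | p.2 = x} = 0)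
    (F : ℝ × ℝ → ℝ)
    (hF : ∀ z : ℝ × ℝ, F z = ∫ p in K, (|z.1 - p.1| + |z.2 - p.2|) ∂μ) :
    ∀ z : ℝ × ℝ,
      HasDerivAt (fun t => F (t, z.2))
        ((μ {p ∈ K | p.1 < z.1}).toReal - (μ {p ∈ K | z.1 < p.1}).toReal) z.1 ∧
      HasDerivAt (fun t => F (z.1, t))
        ((μ {p ∈ K | p.2 < z.2}).toReal - (μ {p ∈ K | z.2 < p.2}).toReal) z.2 := by
  intro z
  have hK : MeasurableSet K := hKc.measurableSet
  have : IsFiniteMeasure (μ.restrict K) := isFiniteMeasure_restrict.2 hμ.ne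
  have hint {f : ℝ × ℝ → ℝ} (hf : Continuous f) : Integrable f (μ.restrict K) :=
    hf.continuousOn.integrableOn_of_isCompact_of_measure_ne_top hKc hK hμ.ne
  have hrestrict (P : ℝ × ℝ → Prop) : μ.restrict K {p | P p} = μ {p ∈ K | P p} := by
    rw [Measure.restrict_apply' hK, inter_comm]; rfl
  simp only [hF, ← hrestrict, ← measureReal_def]
  constructor
  · exact hasDerivAt_integral_abs_sub_add measurable_fst (hint continuous_fst)
      (hint (by fun_prop)) (by rw [hrestrict]; exact (hC3 z.1).1)
  · simp only [add_comm |z.1 - _|]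
    exact hasDerivAt_integral_abs_sub_add measurable_snd (hint continuous_snd)
      (hint (by fun_prop)) (by rw [hrestrict]; exact (hC3 z.2).2)

theorem stmt5 (K : Set (ℝ × ℝ)) (hKne : K.Nonempty) (hKc : IsCompact K)
    (hKcl : K = closure (interior K)) (μ : Measure (ℝ × ℝ)) (hμ : μ K < ⊤)
    (hC3 : ∀ x : ℝ, μ {p ∈ K | p.1 = x} = 0 ∧ μ {p ∈ K | p.2 = x} = 0)
    (F : ℝ × ℝ → ℝ)
    (hF : ∀ z : ℝ × ℝ, F z = ∫ p in K, (|z.1 - p.1| + |z.2 - p.2|) ∂μ) :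
    ∀ z : ℝ × ℝ,
      HasDerivAt (fun t => F (t, z.2))
        ((μ {p ∈ K | p.1 < z.1}).toReal - (μ {p ∈ K | z.1 < p.1}).toReal) z.1 ∧
      HasDerivAt (fun t => F (z.1, t))
        ((μ {p ∈ K | p.2 < z.2}).toReal - (μ {p ∈ K | z.2 < p.2}).toReal) z.2 :=
  stmt5_general K hKc μ hμ hC3 F hF
end

section
/- Let K ⊂ ℝ² be a connected compact body and μ a finite measure on K such that μ(B(p,ε) ∩ K) > 0 for every p ∈ K and ε > 0, and μ gives zero measure to all vertical and horizontal lines. Then F_{K,μ} has a unique global minimizer (x*,y*) ∈ ℝ², and F_{K,μ}(x,y) > F_{K,μ}(x*,y*) for all (x,y) ≠ (x*,y*). -/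
/-!
Since `|x - α| + |y - β|` splits into a function of `x` and a function of `y`, it suffices to show
that each coordinate projection `ρ` of `μ` restricted to `K` gives a function
`x ↦ ∫ |x - t| dρ(t)` with a strict global minimum. As `K` is compact and connected, `ρ` is carried
by an interval `[a, b]` all of whose points lie in the support of `ρ`. The function is continuous, so
it has a minimum on `[a, b]`, and it grows linearly outside `[a, b]`. Two distinct minimizers `u, v`
are impossible: the midpoint inequality `2|(u + v)/2 - t| ≤ |u - t| + |v - t|` is strict on the
ball of radius `|u - v| / 2` about `(u + v)/2`, which has positive `ρ`-measure.
-/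

open MeasureTheory Metric Set

noncomputable def absDev (ρ : Measure ℝ) (x : ℝ) : ℝ := ∫ t, |x - t| ∂ρ

section AbsDev

variable {ρ : Measure ℝ}

lemma integrable_abs_sub_of_ae_mem_Icc [IsFiniteMeasure ρ] {a b : ℝ}
    (hconc : ∀ᵐ t ∂ρ, t ∈ Icc a b) (x : ℝ) : Integrable (fun t => |x - t|) ρ := by
  rw [← Measure.restrict_eq_self_of_ae_mem hconc]
  exact (continuous_const.sub continuous_id).abs.continuousOn.integrableOn_Icc

lemma lipschitzWith_absDev [IsFiniteMeasure ρ] (hint : ∀ x, Integrable (fun t => |x - t|) ρ) :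
    LipschitzWith (ρ.real univ).toNNReal (absDev ρ) := by
  refine LipschitzWith.of_dist_le_mul fun x y => ?_
  rw [dist_eq_norm, absDev, absDev, ← integral_sub (hint x) (hint y),
    Real.coe_toNNReal _ measureReal_nonneg, mul_comm]
  refine norm_integral_le_of_norm_le_const (ae_of_all _ fun t => ?_)
  simpa [Real.dist_eq] using abs_abs_sub_abs_le_abs_sub (x - t) (y - t)

lemma absDev_eq_add_of_ae [IsFiniteMeasure ρ] (hint : ∀ x, Integrable (fun t => |x - t|) ρ) {x y : ℝ}
    (h : ∀ᵐ t ∂ρ, |x - t| = |y - t| + |x - y|) :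
    absDev ρ x = absDev ρ y + |x - y| * ρ.real univ := by
  rw [absDev, integral_congr_ae h, integral_add (hint y) (integrable_const _), integral_const,
    smul_eq_mul, mul_comm, absDev]

lemma absDev_midpoint_lt (hint : ∀ x, Integrable (fun t => |x - t|) ρ) {u v : ℝ}
    (hball : 0 < ρ (ball ((u + v) / 2) (|u - v| / 2))) :
    absDev ρ ((u + v) / 2) < (absDev ρ u + absDev ρ v) / 2 := by
  set c := (u + v) / 2 with hc
  have hgap : ∀ t, 2 * |c - t| ≤ |u - t| + |v - t| := fun t => by
    calc 2 * |c - t| = |(u - t) + (v - t)| := by rw [← abs_two, ← abs_mul, hc]; ring_nf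
      _ ≤ |u - t| + |v - t| := abs_add_le _ _
  have hstrict : ∀ t ∈ ball c (|u - v| / 2), 2 * |c - t| < |u - t| + |v - t| := fun t ht => by
    rw [mem_ball, Real.dist_eq, abs_sub_comm] at ht
    calc 2 * |c - t| < |u - v| := by linarith
      _ = |(u - t) - (v - t)| := by ring_nf
      _ ≤ |u - t| + |v - t| := abs_sub _ _
  have hsum : Integrable (fun t => |u - t| + |v - t|) ρ := (hint u).add (hint v)
  have hmid : Integrable (fun t => 2 * |c - t|) ρ := (hint c).const_mul 2
  have hpos : 0 < ∫ t, (|u - t| + |v - t| - 2 * |c - t|) ∂ρ := by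
    rw [integral_pos_iff_support_of_nonneg (fun t => sub_nonneg.2 (hgap t)) (hsum.sub hmid)]
    exact hball.trans_le (measure_mono fun t ht => (sub_pos.2 (hstrict t ht)).ne')
  rw [integral_sub hsum hmid, integral_add (hint u) (hint v), integral_const_mul] at hpos
  rw [absDev, absDev, absDev]
  linarith

theorem exists_forall_ne_absDev_lt [IsFiniteMeasure ρ] {a b : ℝ} (hab : a ≤ b)
    (hconc : ∀ᵐ t ∂ρ, t ∈ Icc a b) (hsupp : ∀ x ∈ Icc a b, ∀ ε > 0, 0 < ρ (ball x ε)) :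
    ∃ m, ∀ x ≠ m, absDev ρ m < absDev ρ x := by
  have hint := integrable_abs_sub_of_ae_mem_Icc hconc
  have hmass : 0 < ρ.real univ :=
    ENNReal.toReal_pos ((hsupp a ⟨le_rfl, hab⟩ 1 one_pos).trans_le (measure_mono (subset_univ _))).ne'
      (measure_ne_top ρ _)
  have hbelow : ∀ x < a, absDev ρ a < absDev ρ x := fun x hx => by
    rw [absDev_eq_add_of_ae hint (x := x) (y := a) (hconc.mono fun t ht => ?_)]
    · exact lt_add_of_pos_right _ (mul_pos (abs_pos.2 (sub_ne_zero.2 hx.ne)) hmass)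
    · rw [← (abs_add_eq_add_abs_iff _ _).2 (.inr ⟨sub_nonpos.2 ht.1, by linarith⟩),
        sub_add_sub_cancel']
  have habove : ∀ x > b, absDev ρ b < absDev ρ x := fun x hx => by
    rw [absDev_eq_add_of_ae hint (x := x) (y := b) (hconc.mono fun t ht => ?_)]
    · exact lt_add_of_pos_right _ (mul_pos (abs_pos.2 (sub_ne_zero.2 hx.ne')) hmass)
    · rw [← (abs_add_eq_add_abs_iff _ _).2 (.inl ⟨sub_nonneg.2 ht.2, by linarith⟩),
        sub_add_sub_cancel']
  obtain ⟨m, hm, hmin⟩ := isCompact_Icc.exists_isMinOn (nonempty_Icc.2 hab)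
    (lipschitzWith_absDev hint).continuous.continuousOn
  rw [isMinOn_iff] at hmin
  have houtside : ∀ x ∉ Icc a b, absDev ρ m < absDev ρ x := fun x hx => by
    rcases not_and_or.1 hx with hx | hx
    · exact (hmin a ⟨le_rfl, hab⟩).trans_lt (hbelow x (not_le.1 hx))
    · exact (hmin b ⟨hab, le_rfl⟩).trans_lt (habove x (not_le.1 hx))
  refine ⟨m, fun x hxm => ?_⟩
  by_contra! hx
  have hxI : x ∈ Icc a b := by_contra fun h => (houtside x h).not_ge hx
  have hcI : (m + x) / 2 ∈ Icc a b := ⟨by linarith [hm.1, hxI.1], by linarith [hm.2, hxI.2]⟩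
  have hmid := absDev_midpoint_lt hint
    (hsupp _ hcI _ (half_pos (abs_pos.2 (sub_ne_zero.2 hxm.symm))))
  linarith [hmin _ hcI]

end AbsDev

section Projection

variable {X : Type*} [MeasurableSpace X] {ν : Measure X} {f : X → ℝ}

lemma absDev_map (hf : Measurable f) (x : ℝ) : absDev (ν.map f) x = ∫ p, |x - f p| ∂ν :=
  integral_map hf.aemeasurable (continuous_const.sub continuous_id).abs.aestronglyMeasurable

variable [MetricSpace X] [OpensMeasurableSpace X] {K : Set X}

lemma integrable_abs_sub_comp [IsFiniteMeasure ν] (hKc : IsCompact K) (hK : ∀ᵐ p ∂ν, p ∈ K)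
    (hf : Continuous f) (x : ℝ) : Integrable (fun p => |x - f p|) ν := by
  have hcont : Continuous fun p => |x - f p| := (continuous_const.sub hf).abs
  obtain ⟨C, hC⟩ := hKc.exists_bound_of_continuousOn hcont.continuousOn
  exact .of_bound hcont.aestronglyMeasurable C (hK.mono hC)

theorem exists_forall_ne_absDev_map_lt [IsFiniteMeasure ν] (hKc : IsCompact K)
    (hKconn : IsConnected K) (hK : ∀ᵐ p ∂ν, p ∈ K)
    (hsupp : ∀ p ∈ K, ∀ ε > 0, 0 < ν (ball p ε)) (hf : LipschitzWith 1 f) :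
    ∃ m, ∀ x ≠ m, absDev (ν.map f) m < absDev (ν.map f) x := by
  have hfm : Measurable f := hf.continuous.measurable
  have hIcc := eq_Icc_of_connected_compact (hKconn.image f hf.continuous.continuousOn)
    (hKc.image hf.continuous)
  refine exists_forall_ne_absDev_lt (a := sInf (f '' K)) (b := sSup (f '' K)) ?_ ?_ ?_
  · rw [← nonempty_Icc, ← hIcc]
    exact hKconn.nonempty.image f
  · rw [← hIcc]
    exact (ae_map_iff hfm.aemeasurable (p := (· ∈ f '' K)) (hKc.image hf.continuous).measurableSet).2
      (hK.mono fun p hp => mem_image_of_mem f hp)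
  · rintro x hx ε hε
    rw [← hIcc] at hx
    obtain ⟨p, hp, rfl⟩ := hx
    rw [Measure.map_apply hfm measurableSet_ball]
    refine (hsupp p hp ε hε).trans_le (measure_mono fun q hq => ?_)
    simpa using (hf.dist_le_mul q p).trans_lt (by simpa using hq)

end Projection

lemma add_lt_add_of_ne_of_forall_ne_lt {α β M : Type*} [AddCommMonoid M] [PartialOrder M]
    [IsOrderedCancelAddMonoid M] {g₁ : α → M} {g₂ : β → M} {m₁ : α} {m₂ : β}
    (h₁ : ∀ x ≠ m₁, g₁ m₁ < g₁ x) (h₂ : ∀ y ≠ m₂, g₂ m₂ < g₂ y) {w : α × β} (hw : w ≠ (m₁, m₂)) :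
    g₁ m₁ + g₂ m₂ < g₁ w.1 + g₂ w.2 := by
  by_cases hw₁ : w.1 = m₁
  · have hw₂ : w.2 ≠ m₂ := fun hw₂ => hw (Prod.ext hw₁ hw₂)
    rw [hw₁]
    exact add_lt_add_of_le_of_lt le_rfl (h₂ _ hw₂)
  · rcases eq_or_ne w.2 m₂ with hw₂ | hw₂
    · rw [hw₂]
      exact add_lt_add_of_lt_of_le (h₁ _ hw₁) le_rfl
    · exact add_lt_add (h₁ _ hw₁) (h₂ _ hw₂)

theorem stmt7_general (K : Set (ℝ × ℝ)) (hKc : IsCompact K)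
    (hConn : IsConnected K)
    (μ : Measure (ℝ × ℝ)) (hμ : μ K < ⊤)
    (hC2 : ∀ p ∈ K, ∀ ε > (0:ℝ), 0 < μ (Metric.ball p ε ∩ K))
    (F : ℝ × ℝ → ℝ)
    (hF : ∀ z : ℝ × ℝ, F z = ∫ p in K, (|z.1 - p.1| + |z.2 - p.2|) ∂μ) :
    ∃ z : ℝ × ℝ, ∀ w : ℝ × ℝ, w ≠ z → F z < F w := by
  have : IsFiniteMeasure (μ.restrict K) := ⟨by rwa [Measure.restrict_apply_univ]⟩
  have hK : ∀ᵐ p ∂μ.restrict K, p ∈ K := ae_restrict_mem hKc.isClosed.measurableSet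
  have hsupp : ∀ p ∈ K, ∀ ε > 0, 0 < μ.restrict K (ball p ε) := fun p hp ε hε => by
    rw [Measure.restrict_apply measurableSet_ball]
    exact hC2 p hp ε hε
  obtain ⟨m₁, hm₁⟩ := exists_forall_ne_absDev_map_lt hKc hConn hK hsupp LipschitzWith.prod_fst
  obtain ⟨m₂, hm₂⟩ := exists_forall_ne_absDev_map_lt hKc hConn hK hsupp LipschitzWith.prod_snd
  have hsplit : ∀ z : ℝ × ℝ, F z = absDev ((μ.restrict K).map Prod.fst) z.1 +
      absDev ((μ.restrict K).map Prod.snd) z.2 := fun z => by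
    rw [hF, integral_add (integrable_abs_sub_comp hKc hK continuous_fst z.1)
      (integrable_abs_sub_comp hKc hK continuous_snd z.2), absDev_map measurable_fst,
      absDev_map measurable_snd]
  refine ⟨(m₁, m₂), fun w hw => ?_⟩
  rw [hsplit, hsplit]
  exact add_lt_add_of_ne_of_forall_ne_lt hm₁ hm₂ hw

theorem stmt7 (K : Set (ℝ × ℝ)) (hKne : K.Nonempty) (hKc : IsCompact K)
    (hKcl : K = closure (interior K)) (hConn : IsConnected K)
    (μ : Measure (ℝ × ℝ)) (hμ : μ K < ⊤)
    (hC2 : ∀ p ∈ K, ∀ ε > (0:ℝ), 0 < μ (Metric.ball p ε ∩ K))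
    (hC3 : ∀ x : ℝ, μ {p ∈ K | p.1 = x} = 0 ∧ μ {p ∈ K | p.2 = x} = 0)
    (F : ℝ × ℝ → ℝ)
    (hF : ∀ z : ℝ × ℝ, F z = ∫ p in K, (|z.1 - p.1| + |z.2 - p.2|) ∂μ) :
    ∃ z : ℝ × ℝ, ∀ w : ℝ × ℝ, w ≠ z → F z < F w :=
  stmt7_general K hKc hConn μ hμ hC2 F hF
end

section
/- If K is the triangle with vertices (0,0), (0,1), (1,0), then for all (x,y) ∈ K, F_K(x,y) = −(2/3)(x³+y³) + 2(x²+y²) − (x+y) + 2/3, and the global minimizer of F_K is (1 − √2/2, 1 − √2/2). -/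
/-!
Since `|x - α| + |y - β|` separates and the triangle is symmetric under `(α, β) ↦ (β, α)`,
`F_K(x, y) = 2 (g x + g y)` with `g t = ∫_K |t - α| = ∫₀¹ (1 - α) |t - α| dα` (Fubini: the
vertical slice of `K` at `α` has length `1 - α`). On `[0, 1]` the function `g` is the cubic
`1/6 - t/2 + t² - t³/3`, whose minimum is at `1 - √2/2`; outside `[0, 1]`, clamping `t` into
`[0, 1]` only decreases `g`, because `α` ranges over `[0, 1]` on `K`.
-/

open MeasureTheory Set

theorem setIntegral_comp_fst_eq_integral_measureReal_slice {α β E : Type*}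
    [MeasurableSpace α] [MeasurableSpace β] [NormedAddCommGroup E] [NormedSpace ℝ E]
    [CompleteSpace E] {μ : Measure α} {ν : Measure β} [SFinite μ] [SFinite ν]
    {s : Set (α × β)} {f : α → E}
    (hs : MeasurableSet s) (hf : IntegrableOn (fun p => f p.1) s (μ.prod ν)) :
    ∫ p in s, f p.1 ∂μ.prod ν = ∫ x, ν.real (Prod.mk x ⁻¹' s) • f x ∂μ := by
  rw [← integral_indicator hs, integral_prod _ (hf.integrable_indicator hs)]
  congr 1 with x
  rw [← integral_indicator_const _ (measurable_prodMk_left hs)]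
  rfl

theorem setIntegral_comp_snd_eq_comp_fst {α E : Type*} [MeasurableSpace α]
    [NormedAddCommGroup E] [NormedSpace ℝ E] {μ : Measure α} [SFinite μ] {s : Set (α × α)}
    (hs : Prod.swap ⁻¹' s = s) (f : α → E) :
    ∫ p in s, f p.2 ∂μ.prod μ = ∫ p in s, f p.1 ∂μ.prod μ := by
  have := (Measure.measurePreserving_swap (μ := μ) (ν := μ)).setIntegral_preimage_emb
    MeasurableEquiv.prodComm.measurableEmbedding (fun p => f p.1) s
  rwa [hs] at this

theorem integral_quadratic (a b c d e : ℝ) :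
    ∫ t in a..b, (c * t ^ 2 + d * t + e) =
      c * ((b ^ 3 - a ^ 3) / 3) + d * ((b ^ 2 - a ^ 2) / 2) + e * (b - a) := by
  have hc : IntervalIntegrable (fun t : ℝ => c * t ^ 2) volume a b :=
    (continuous_const.mul (continuous_pow 2)).intervalIntegrable a b
  have hd : IntervalIntegrable (fun t : ℝ => d * t) volume a b :=
    (continuous_const.mul continuous_id).intervalIntegrable a b
  rw [intervalIntegral.integral_add (hc.add hd) intervalIntegrable_const,
    intervalIntegral.integral_add hc hd, intervalIntegral.integral_const_mul,
    intervalIntegral.integral_const_mul, integral_pow, integral_id,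
    intervalIntegral.integral_const, smul_eq_mul]
  ring

def triangle : Set (ℝ × ℝ) := {p | 0 ≤ p.1 ∧ 0 ≤ p.2 ∧ p.1 + p.2 ≤ 1}

theorem isCompact_triangle : IsCompact triangle := by
  refine (isCompact_Icc (a := ((0 : ℝ), (0 : ℝ))) (b := ((1 : ℝ), (1 : ℝ)))).of_isClosed_subset
    ?_ ?_
  · exact (isClosed_le continuous_const continuous_fst).inter
      ((isClosed_le continuous_const continuous_snd).inter
        (isClosed_le (continuous_fst.add continuous_snd) continuous_const))
  · rintro p ⟨h1, h2, h3⟩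
    show ((0 : ℝ), (0 : ℝ)) ≤ p ∧ p ≤ (1, 1)
    exact ⟨⟨h1, h2⟩, ⟨by linarith, by linarith⟩⟩

theorem measurableSet_triangle : MeasurableSet triangle :=
  isCompact_triangle.isClosed.measurableSet

theorem integrableOn_triangle {f : ℝ × ℝ → ℝ} (hf : Continuous f) : IntegrableOn f triangle :=
  hf.continuousOn.integrableOn_compact isCompact_triangle

theorem swap_preimage_triangle : Prod.swap ⁻¹' triangle = triangle := by
  ext p
  simp only [triangle, mem_preimage, mem_ofPred_eq, Prod.fst_swap, Prod.snd_swap]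
  constructor <;> rintro ⟨h1, h2, h3⟩ <;> exact ⟨h2, h1, by linarith⟩

theorem measureReal_triangle_slice (x : ℝ) :
    volume.real (Prod.mk x ⁻¹' triangle) = (Icc 0 1).indicator (fun x => 1 - x) x := by
  by_cases hx : 0 ≤ x
  · have : Prod.mk x ⁻¹' triangle = Icc 0 (1 - x) := by
      ext y; simp only [triangle, mem_preimage, mem_ofPred_eq, mem_Icc]
      constructor
      · rintro ⟨-, hy, hxy⟩; exact ⟨hy, by linarith⟩
      · rintro ⟨hy, hxy⟩; exact ⟨hx, hy, by linarith⟩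
    rw [this, Real.volume_real_Icc, sub_zero]
    by_cases hx1 : x ≤ 1
    · rw [indicator_of_mem (mem_Icc.2 ⟨hx, hx1⟩), max_eq_left (by linarith)]
    · rw [indicator_of_notMem (fun h => hx1 h.2), max_eq_right (by linarith)]
  · have : Prod.mk x ⁻¹' triangle = ∅ := by
      ext y; simp only [triangle, mem_preimage, mem_ofPred_eq, mem_empty_iff_false, iff_false]
      exact fun h => hx h.1
    rw [this, measureReal_empty, indicator_of_notMem (fun h => hx h.1)]

theorem setIntegral_triangle_comp_fst {f : ℝ → ℝ} (hf : Continuous f) :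
    ∫ p in triangle, f p.1 = ∫ x in (0 : ℝ)..1, (1 - x) * f x := by
  have hint : IntegrableOn (fun p : ℝ × ℝ => f p.1) triangle (volume.prod volume) := by
    rw [← Measure.volume_eq_prod]
    exact integrableOn_triangle (by fun_prop)
  rw [Measure.volume_eq_prod,
    setIntegral_comp_fst_eq_integral_measureReal_slice measurableSet_triangle hint]
  simp_rw [measureReal_triangle_slice, smul_eq_mul, ← indicator_mul_left]
  rw [integral_indicator measurableSet_Icc, integral_Icc_eq_integral_Ioc,
    ← intervalIntegral.integral_of_le zero_le_one]

theorem measureReal_triangle : volume.real triangle = 1 / 2 := by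
  have h := setIntegral_triangle_comp_fst (f := fun _ => (1 : ℝ)) continuous_const
  rw [setIntegral_const, smul_eq_mul, mul_one] at h
  have hquad : (fun x : ℝ => (1 - x) * 1) = fun x => 0 * x ^ 2 + -1 * x + 1 := by
    ext x; ring
  rw [h, hquad, integral_quadratic]
  norm_num

noncomputable def triangleAbsDev (t : ℝ) : ℝ := ∫ p in triangle, |t - p.1|

theorem triangleAbsDev_eq {t : ℝ} (ht : t ∈ Icc (0 : ℝ) 1) :
    triangleAbsDev t = 1 / 6 - t / 2 + t ^ 2 - t ^ 3 / 3 := by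
  have hcont : Continuous fun x : ℝ => (1 - x) * |t - x| := by fun_prop
  rw [triangleAbsDev, setIntegral_triangle_comp_fst (f := fun x => |t - x|) (by fun_prop),
    ← intervalIntegral.integral_add_adjacent_intervals (hcont.intervalIntegrable 0 t)
      (hcont.intervalIntegrable t 1)]
  have below : ∫ x in (0 : ℝ)..t, (1 - x) * |t - x|
      = ∫ x in (0 : ℝ)..t, (1 * x ^ 2 + -(1 + t) * x + t) := by
    refine intervalIntegral.integral_congr fun x hx => ?_
    rw [uIcc_of_le ht.1] at hx
    simp only [abs_of_nonneg (sub_nonneg.2 hx.2)]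
    ring
  have above : ∫ x in t..(1 : ℝ), (1 - x) * |t - x|
      = ∫ x in t..(1 : ℝ), (-1 * x ^ 2 + (1 + t) * x + -t) := by
    refine intervalIntegral.integral_congr fun x hx => ?_
    rw [uIcc_of_le ht.2] at hx
    simp only [abs_of_nonpos (sub_nonpos.2 hx.1)]
    ring
  rw [below, above, integral_quadratic, integral_quadratic]
  ring

theorem triangleAbsDev_projIcc_le (t : ℝ) :
    triangleAbsDev (projIcc 0 1 zero_le_one t) ≤ triangleAbsDev t := by
  refine setIntegral_mono_on (integrableOn_triangle (by fun_prop))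
    (integrableOn_triangle (by fun_prop)) measurableSet_triangle fun p hp => ?_
  have hp1 : p.1 ∈ Icc (0 : ℝ) 1 := ⟨hp.1, by linarith [hp.2.1, hp.2.2]⟩
  simpa [projIcc_of_mem zero_le_one hp1] using
    abs_projIcc_sub_projIcc (c := t) (d := p.1) zero_le_one

theorem triangleAbsDev_le_of_mem_Icc {t : ℝ} (ht : t ∈ Icc (0 : ℝ) 1) :
    triangleAbsDev (1 - √2 / 2) ≤ triangleAbsDev t := by
  have hsqrt : √2 ^ 2 = 2 := Real.sq_sqrt zero_le_two
  have hsqrt_lt : √2 < 2 := by nlinarith [Real.sqrt_nonneg 2]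
  have hm : 1 - √2 / 2 ∈ Icc (0 : ℝ) 1 := ⟨by linarith, by linarith [Real.sqrt_nonneg 2]⟩
  rw [triangleAbsDev_eq ht, triangleAbsDev_eq hm]
  -- `1 - √2 / 2` is the critical point of the cubic in `[0, 1]`, hence a double root here
  have hfactor : (1 / 6 - t / 2 + t ^ 2 - t ^ 3 / 3)
      - (1 / 6 - (1 - √2 / 2) / 2 + (1 - √2 / 2) ^ 2 - (1 - √2 / 2) ^ 3 / 3)
      = (t - (1 - √2 / 2)) ^ 2 * (1 + √2 - t) / 3 := by
    linear_combination (-(t - (1 - √2 / 2)) / 4) * hsqrt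
  have : 0 ≤ (t - (1 - √2 / 2)) ^ 2 * (1 + √2 - t) / 3 := by
    have : 0 ≤ 1 + √2 - t := by linarith [Real.sqrt_nonneg 2, ht.2]
    positivity
  linarith

theorem triangleAbsDev_min (t : ℝ) : triangleAbsDev (1 - √2 / 2) ≤ triangleAbsDev t :=
  (triangleAbsDev_le_of_mem_Icc (projIcc 0 1 zero_le_one t).2).trans (triangleAbsDev_projIcc_le t)

theorem setIntegral_triangle_abs_add (z : ℝ × ℝ) :
    ∫ p in triangle, (|z.1 - p.1| + |z.2 - p.2|) = triangleAbsDev z.1 + triangleAbsDev z.2 := by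
  rw [integral_add (integrableOn_triangle (by fun_prop)) (integrableOn_triangle (by fun_prop)),
    Measure.volume_eq_prod,
    setIntegral_comp_snd_eq_comp_fst swap_preimage_triangle (fun x => |z.2 - x|),
    ← Measure.volume_eq_prod]
  rfl

theorem stmt9 (K : Set (ℝ × ℝ))
    (hK : K = {p : ℝ × ℝ | 0 ≤ p.1 ∧ 0 ≤ p.2 ∧ p.1 + p.2 ≤ 1})
    (F : ℝ × ℝ → ℝ)
    (hF : ∀ z : ℝ × ℝ, F z =
      (volume K).toReal⁻¹ * ∫ p in K, (|z.1 - p.1| + |z.2 - p.2|)) :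
    (∀ z ∈ K, F z = -(2 / 3) * (z.1 ^ 3 + z.2 ^ 3) + 2 * (z.1 ^ 2 + z.2 ^ 2)
        - (z.1 + z.2) + 2 / 3) ∧
      (∀ w : ℝ × ℝ, F (1 - Real.sqrt 2 / 2, 1 - Real.sqrt 2 / 2) ≤ F w) := by
  obtain rfl : K = triangle := hK
  have hF' (z : ℝ × ℝ) : F z = 2 * (triangleAbsDev z.1 + triangleAbsDev z.2) := by
    rw [hF, ← measureReal_def, measureReal_triangle, setIntegral_triangle_abs_add]
    norm_num
  refine ⟨fun z ⟨hx, hy, hxy⟩ => ?_, fun w => ?_⟩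
  · rw [hF', triangleAbsDev_eq ⟨hx, by linarith⟩, triangleAbsDev_eq ⟨hy, by linarith⟩]
    ring
  · rw [hF', hF']
    linarith [triangleAbsDev_min w.1, triangleAbsDev_min w.2]
end

section
/- Let (X_k) be the stochastic recursion X_0 = x_0 ∈ K, X_{k+1} = X_k − t_{k+1} Q_{k+1}, where Q_{k+1} ∈ {(±1,±1)} has signs determined by componentwise comparison of X_k with an independent μ-distributed sample P_{k+1} (sign +1 in coordinate i iff X_k^{(i)} ≥ P_{k+1}^{(i)}). Assuming Condition (C.3) for μ, the conditional expectation satisfies E(Q_{i} | X_{i−1}) = grad F_{K,μ}(X_{i−1}) for all i ≥ 1, and consequently E(X_k) = x_0 − Σ_{i=1}^k t_i E(grad F_{K,μ}(X_{i−1})). -/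
/-!
Conditionally on `X_k`, the sample `P_{k+1}` is still `μ`-distributed: `X_k` is a measurable
function of `P_1, …, P_k`, hence independent of `P_{k+1}`. By the freezing lemma,
`E(Q_{k+1} | X_k) = ∫ signVec X_k p dμ(p)`, and coordinatewise this integral is
`μ(p_i < z_i) − μ(z_i < p_i)`, because Condition (C.3) makes the ties `p_i = z_i` null.
Unrolling the recursion, `X_k = x_0 − ∑ t_i Q_i`, and `E Q_i = E (E(Q_i | X_{i−1}))` then give
the formula for `E X_k`.
-/

open MeasureTheory

section

variable {Ω : Type*} {mΩ : MeasurableSpace Ω} {μ : Measure Ω}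

lemma measure_sep_of_measure_compl_eq_zero {K : Set Ω} (hK : μ Kᶜ = 0) (q : Ω → Prop) :
    μ {ω ∈ K | q ω} = μ {ω | q ω} := by
  change μ (K ∩ {ω | q ω}) = _
  rw [Set.inter_comm, measure_inter_conull hK]

lemma integral_ite_le_eq_measureReal_sub [IsFiniteMeasure μ] {f : Ω → ℝ}
    (hf : Measurable f) {a : ℝ} (ha : μ {ω | f ω = a} = 0) :
    ∫ ω, (if f ω ≤ a then (1 : ℝ) else -1) ∂μ = μ.real {ω | f ω < a} - μ.real {ω | a < f ω} := by
  have hae : (fun ω => if f ω ≤ a then (1 : ℝ) else -1) =ᵐ[μ]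
      fun ω => {ω | f ω < a}.indicator 1 ω - {ω | a < f ω}.indicator 1 ω := by
    filter_upwards [measure_eq_zero_iff_ae_notMem.mp ha] with ω hω
    rcases lt_trichotomy (f ω) a with h | h | h
    · simp [h, h.le, h.not_gt]
    · exact absurd h hω
    · simp [h, h.not_ge, h.not_gt]
  have hlt : MeasurableSet {ω | f ω < a} := measurableSet_lt hf measurable_const
  have hgt : MeasurableSet {ω | a < f ω} := measurableSet_lt measurable_const hf
  rw [integral_congr_ae hae, integral_sub ((integrable_const 1).indicator hlt)
    ((integrable_const 1).indicator hgt), integral_indicator_one hlt, integral_indicator_one hgt]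

end

/-- `Q_{k+1} = signVec X_k P_{k+1}`. -/
noncomputable def signVec (z p : ℝ × ℝ) : ℝ × ℝ :=
  (if p.1 ≤ z.1 then 1 else -1, if p.2 ≤ z.2 then 1 else -1)

lemma measurable_signVec : Measurable (Function.uncurry signVec) := by
  unfold Function.uncurry signVec
  refine Measurable.prodMk ?_ ?_ <;>
    exact Measurable.ite (measurableSet_le (by fun_prop) (by fun_prop)) measurable_const
      measurable_const

lemma norm_signVec_le (z p : ℝ × ℝ) : ‖signVec z p‖ ≤ 1 := by
  unfold signVec
  rw [Prod.norm_def]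
  refine max_le ?_ ?_ <;> split_ifs <;> simp

lemma integral_signVec {μ : Measure (ℝ × ℝ)} [IsProbabilityMeasure μ] {K : Set (ℝ × ℝ)}
    (hK : μ Kᶜ = 0) (hslice : ∀ x : ℝ, μ {p ∈ K | p.1 = x} = 0 ∧ μ {p ∈ K | p.2 = x} = 0)
    (z : ℝ × ℝ) :
    ∫ p, signVec z p ∂μ =
      ((μ {p ∈ K | p.1 < z.1}).toReal - (μ {p ∈ K | z.1 < p.1}).toReal,
       (μ {p ∈ K | p.2 < z.2}).toReal - (μ {p ∈ K | z.2 < p.2}).toReal) := by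
  have hint : ∀ f : ℝ × ℝ → ℝ, Measurable f → ∀ a : ℝ,
      Integrable (fun p => if f p ≤ a then (1 : ℝ) else -1) μ := fun f hf a =>
    .of_bound (Measurable.ite (measurableSet_le hf measurable_const) measurable_const
      measurable_const).aestronglyMeasurable 1 (ae_of_all _ fun p => by split_ifs <;> simp)
  simp only [measure_sep_of_measure_compl_eq_zero hK] at hslice ⊢
  unfold signVec
  rw [integral_pair (hint _ measurable_fst _) (hint _ measurable_snd _),
    integral_ite_le_eq_measureReal_sub measurable_fst (hslice z.1).1,
    integral_ite_le_eq_measureReal_sub measurable_snd (hslice z.2).2]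
  rfl

section

open ProbabilityTheory

variable {Ω α β E : Type*} {mΩ : MeasurableSpace Ω} {μ : Measure Ω}

lemma condExp_comp_prodMk_ae_eq_integral_of_indepFun [MeasurableSpace α] [MeasurableSpace β]
    [StandardBorelSpace β] [Nonempty β] [NormedAddCommGroup E] [NormedSpace ℝ E] [CompleteSpace E]
    [IsFiniteMeasure μ] {X : Ω → α} {Y : Ω → β} {f : α × β → E}
    (hX : Measurable X) (hY : Measurable Y) (hXY : IndepFun X Y μ) (hf : StronglyMeasurable f)
    (hf_int : Integrable (fun ω => f (X ω, Y ω)) μ) :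
    μ[fun ω => f (X ω, Y ω) | MeasurableSpace.comap X inferInstance] =ᵐ[μ]
      fun ω => ∫ y, f (X ω, y) ∂(μ.map Y) := by
  have hκ : condDistrib Y X μ =ᵐ[μ.map X] Kernel.const α (μ.map Y) := by
    refine condDistrib_ae_eq_of_measure_eq_compProd X hY.aemeasurable ?_
    rw [Measure.compProd_const]
    exact (indepFun_iff_map_prod_eq_prod_map_map hX.aemeasurable hY.aemeasurable).mp hXY
  filter_upwards [condExp_prod_ae_eq_integral_condDistrib hX hY.aemeasurable hf hf_int,
    ae_of_ae_map hX.aemeasurable hκ] with ω hω hκω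
  rw [hω, hκω, Kernel.const_apply]

lemma indepFun_of_measurable_iSup_Iic [MeasurableSpace β] [MeasurableSpace α]
    {P : ℕ → Ω → β} (hP : ∀ i, Measurable (P i)) (hPindep : iIndepFun P μ) {Y : Ω → α} {k : ℕ}
    (hY : Measurable[⨆ i ∈ Set.Iic k, MeasurableSpace.comap (P i) inferInstance] Y) :
    IndepFun Y (P (k + 1)) μ := by
  have h := indep_iSup_of_disjoint (fun i => (hP i).comap_le) hPindep.iIndep
    (S := Set.Iic k) (T := {k + 1}) (by simp)
  rw [iSup_singleton] at h
  exact (IndepFun_iff_Indep _ _ _).mpr (indep_of_indep_of_le_left h hY.comap_le)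

lemma measurable_iSup_Iic_of_recursion [MeasurableSpace β] [MeasurableSpace α]
    {P : ℕ → Ω → β} {X : ℕ → Ω → α} {x0 : α}
    {step : ℕ → α × β → α} (hstep : ∀ k, Measurable (step k)) (hX0 : ∀ ω, X 0 ω = x0)
    (hX : ∀ k ω, X (k + 1) ω = step k (X k ω, P (k + 1) ω)) (k : ℕ) :
    Measurable[⨆ i ∈ Set.Iic k, MeasurableSpace.comap (P i) inferInstance] (X k) := by
  induction k with
  | zero =>
    rw [funext hX0]
    exact measurable_const
  | succ k ih =>
    have hmono := biSup_mono (f := fun i => MeasurableSpace.comap (P i) inferInstance)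
      (Set.Iic_subset_Iic.mpr k.le_succ)
    have hPk : Measurable[⨆ i ∈ Set.Iic (k + 1), MeasurableSpace.comap (P i) inferInstance]
        (P (k + 1)) :=
      Measurable.of_comap_le (le_biSup (fun i => MeasurableSpace.comap (P i) inferInstance)
        (Set.mem_Iic.mpr le_rfl))
    rw [funext (hX k)]
    exact (hstep k).comp ((ih.mono hmono le_rfl).prodMk hPk)

lemma eq_sub_sum_of_recursion [AddCommGroup E] [Module ℝ E] {X Q : ℕ → α → E} {x0 : E}
    {t : ℕ → ℝ} (hX0 : ∀ a, X 0 a = x0) (hX : ∀ k a, X (k + 1) a = X k a - t (k + 1) • Q (k + 1) a)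
    (k : ℕ) (a : α) : X k a = x0 - ∑ i ∈ Finset.range k, t (i + 1) • Q (i + 1) a := by
  induction k with
  | zero => simp [hX0]
  | succ k ih => rw [hX, ih, Finset.sum_range_succ, sub_sub]

lemma integral_eq_sub_sum_of_recursion [NormedAddCommGroup E] [NormedSpace ℝ E] [CompleteSpace E]
    [IsProbabilityMeasure μ] {X Q : ℕ → Ω → E} {x0 : E} {t : ℕ → ℝ}
    (hQ : ∀ k, Integrable (Q (k + 1)) μ) (hX0 : ∀ ω, X 0 ω = x0)
    (hX : ∀ k ω, X (k + 1) ω = X k ω - t (k + 1) • Q (k + 1) ω) (k : ℕ) :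
    ∫ ω, X k ω ∂μ = x0 - ∑ i ∈ Finset.range k, t (i + 1) • ∫ ω, Q (i + 1) ω ∂μ := by
  have hterm : ∀ i ∈ Finset.range k, Integrable (fun ω => t (i + 1) • Q (i + 1) ω) μ :=
    fun i _ => (hQ i).smul _
  simp_rw [eq_sub_sum_of_recursion hX0 hX k]
  rw [integral_sub (integrable_const x0) (integrable_finsetSum _ hterm), integral_const,
    probReal_univ, one_smul, integral_finsetSum _ hterm]
  simp_rw [integral_smul]

end

theorem stmt19_general (K : Set (ℝ × ℝ))
    (μ : Measure (ℝ × ℝ)) [IsProbabilityMeasure μ] (hsupp : μ Kᶜ = 0)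
    (hC3 : ∀ x : ℝ, μ {p ∈ K | p.1 = x} = 0 ∧ μ {p ∈ K | p.2 = x} = 0)
    (Ω : Type*) [MeasurableSpace Ω] (ℙ : Measure Ω) [IsProbabilityMeasure ℙ]
    (P : ℕ → Ω → ℝ × ℝ) (hPmeas : ∀ k, Measurable (P k))
    (hPlaw : ∀ k, Measure.map (P k) ℙ = μ)
    (hPindep : ProbabilityTheory.iIndepFun P ℙ)
    (t : ℕ → ℝ) (x0 : ℝ × ℝ)
    (Q X : ℕ → Ω → ℝ × ℝ)
    (hQ : ∀ k ω, Q (k + 1) ω =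
      ((if (P (k + 1) ω).1 ≤ (X k ω).1 then (1:ℝ) else -1),
       (if (P (k + 1) ω).2 ≤ (X k ω).2 then (1:ℝ) else -1)))
    (hX0 : ∀ ω, X 0 ω = x0)
    (hXrec : ∀ k ω, X (k + 1) ω = X k ω - t (k + 1) • Q (k + 1) ω)
    (G : ℝ × ℝ → ℝ × ℝ)
    (hG : ∀ z : ℝ × ℝ, G z =
      ((μ {p ∈ K | p.1 < z.1}).toReal - (μ {p ∈ K | z.1 < p.1}).toReal,
       (μ {p ∈ K | p.2 < z.2}).toReal - (μ {p ∈ K | z.2 < p.2}).toReal)) :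
    (∀ i : ℕ,
      ℙ[Q (i + 1)|MeasurableSpace.comap (X i) inferInstance] =ᵐ[ℙ]
        fun ω => G (X i ω)) ∧
    (∀ k : ℕ, ∫ ω, X k ω ∂ℙ =
      x0 - ∑ i ∈ Finset.range k, t (i + 1) • ∫ ω, G (X i ω) ∂ℙ) := by
  have hQX : ∀ k, Q (k + 1) = fun ω => Function.uncurry signVec (X k ω, P (k + 1) ω) :=
    fun k => funext (hQ k)
  have hXadapted := measurable_iSup_Iic_of_recursion
    (step := fun k q => q.1 - t (k + 1) • Function.uncurry signVec q)
    (fun k => measurable_fst.sub (measurable_signVec.const_smul (t (k + 1)))) hX0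
    (fun k ω => by rw [hXrec, hQX])
  have hXmeas : ∀ k, Measurable (X k) := fun k =>
    (hXadapted k).mono (iSup₂_le fun i _ => (hPmeas i).comap_le) le_rfl
  have hQint : ∀ k, Integrable (Q (k + 1)) ℙ := fun k => by
    rw [hQX k]
    exact .of_bound (measurable_signVec.comp ((hXmeas k).prodMk (hPmeas _))).aestronglyMeasurable
      1 (ae_of_all _ fun ω => norm_signVec_le _ _)
  have hcond : ∀ i, ℙ[Q (i + 1)|MeasurableSpace.comap (X i) inferInstance] =ᵐ[ℙ]
      fun ω => G (X i ω) := fun i => by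
    have hindep := indepFun_of_measurable_iSup_Iic hPmeas hPindep (hXadapted i)
    have hfreeze := condExp_comp_prodMk_ae_eq_integral_of_indepFun (hXmeas i) (hPmeas _) hindep
      measurable_signVec.stronglyMeasurable (hQX i ▸ hQint i)
    rw [hQX i]
    filter_upwards [hfreeze] with ω hω
    rw [hω, hPlaw, hG, ← integral_signVec hsupp hC3]
    rfl
  refine ⟨hcond, fun k => ?_⟩
  rw [integral_eq_sub_sum_of_recursion hQint hX0 hXrec k]
  congr 1
  refine Finset.sum_congr rfl fun i _ => ?_
  rw [← integral_condExp (hXmeas i).comap_le, integral_congr_ae (hcond i)]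

theorem stmt19 (K : Set (ℝ × ℝ)) (hKne : K.Nonempty) (hKc : IsCompact K)
    (hKcl : K = closure (interior K))
    (μ : Measure (ℝ × ℝ)) [IsProbabilityMeasure μ] (hsupp : μ Kᶜ = 0)
    (hC3 : ∀ x : ℝ, μ {p ∈ K | p.1 = x} = 0 ∧ μ {p ∈ K | p.2 = x} = 0)
    (Ω : Type*) [MeasurableSpace Ω] (ℙ : Measure Ω) [IsProbabilityMeasure ℙ]
    (P : ℕ → Ω → ℝ × ℝ) (hPmeas : ∀ k, Measurable (P k))
    (hPlaw : ∀ k, Measure.map (P k) ℙ = μ)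
    (hPindep : ProbabilityTheory.iIndepFun P ℙ)
    (t : ℕ → ℝ) (ht : ∀ k, 0 < t k) (x0 : ℝ × ℝ) (hx0 : x0 ∈ K)
    (Q X : ℕ → Ω → ℝ × ℝ)
    (hQ : ∀ k ω, Q (k + 1) ω =
      ((if (P (k + 1) ω).1 ≤ (X k ω).1 then (1:ℝ) else -1),
       (if (P (k + 1) ω).2 ≤ (X k ω).2 then (1:ℝ) else -1)))
    (hX0 : ∀ ω, X 0 ω = x0)
    (hXrec : ∀ k ω, X (k + 1) ω = X k ω - t (k + 1) • Q (k + 1) ω)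
    (G : ℝ × ℝ → ℝ × ℝ)
    (hG : ∀ z : ℝ × ℝ, G z =
      ((μ {p ∈ K | p.1 < z.1}).toReal - (μ {p ∈ K | z.1 < p.1}).toReal,
       (μ {p ∈ K | p.2 < z.2}).toReal - (μ {p ∈ K | z.2 < p.2}).toReal)) :
    (∀ i : ℕ,
      ℙ[Q (i + 1)|MeasurableSpace.comap (X i) inferInstance] =ᵐ[ℙ]
        fun ω => G (X i ω)) ∧
    (∀ k : ℕ, ∫ ω, X k ω ∂ℙ =
      x0 - ∑ i ∈ Finset.range k, t (i + 1) • ∫ ω, G (X i ω) ∂ℙ) :=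
  stmt19_general K μ hsupp hC3 Ω ℙ P hPmeas hPlaw hPindep t x0 Q X hQ hX0 hXrec G hG
end
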